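/- Let Λ be a finite set with N := |Λ|, let J > 0 and h ∈ ℝ, and let ε lie in the range of ε_N. Define m_± := −h/J ± √(h²/J² − 2ε/J). Then for every function f : {−1,1}^Λ → ℝ, (1/|S_ε|) Σ_{φ∈S_ε} f(φ) = (|S_{m_+}|/(|S_{m_+}|+|S_{m_−}|)) · ⟨f⟩_MC^{m_+;N} + (|S_{m_−}|/(|S_{m_+}|+|S_{m_−}|)) · ⟨f⟩_MC^{m_−;N}, with the convention that ⟨f⟩_MC^{m;N} := 0 and |S_m| := 0 whenever m does not lie in the range of m_N. -/

import Mathlib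

/-- The magnetization `M[φ] = ∑_{x ∈ Λ} φ(x)` of a spin configuration `φ ∈ {−1,1}^Λ`,
encoded as `φ : Λ → Bool` with `true ↦ 1`, `false ↦ −1`. -/
noncomputable def mag {Λ : Type} [Fintype Λ] (φ : Λ → Bool) : ℝ :=
  ∑ x, if φ x then (1 : ℝ) else -1

/-- The Curie–Weiss Hamiltonian `H[φ] = −(J/(2N)) M[φ]² − h M[φ]`. -/
noncomputable def ham (Λ : Type) [Fintype Λ] (J h : ℝ) (φ : Λ → Bool) : ℝ :=
  -(J / (2 * (Fintype.card Λ : ℝ))) * mag φ ^ 2 - h * mag φ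

-- The set `S_m` of configurations with magnetization density `m`
-- (empty, i.e. `|S_m| = 0`, when `m` is not in the range of `m_N`).
open Classical in
noncomputable def magSet (Λ : Type) [Fintype Λ] (m : ℝ) : Finset (Λ → Bool) :=
  Finset.univ.filter fun φ => mag φ / (Fintype.card Λ : ℝ) = m

-- The set `S_ε` of configurations with energy density `ε`.
open Classical in
noncomputable def enSet (Λ : Type) [Fintype Λ] (J h ε : ℝ) : Finset (Λ → Bool) :=
  Finset.univ.filter fun φ => ham Λ J h φ / (Fintype.card Λ : ℝ) = ε

/-- Expectation `⟨f⟩_MC^{m;N}` in the fixed magnetization (auxiliary microcanonical) ensemble;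
by the division convention this is `0` when `m` is not in the range of `m_N`. -/
noncomputable def mcMagExp (Λ : Type) [Fintype Λ] (m : ℝ) (f : (Λ → Bool) → ℝ) : ℝ :=
  (∑ φ ∈ magSet Λ m, f φ) / ((magSet Λ m).card : ℝ)

/-- Expectation `⟨f⟩_MC^{ε;N}` in the fixed energy density (microcanonical) ensemble. -/
noncomputable def mcEnExp (Λ : Type) [Fintype Λ] (J h ε : ℝ) (f : (Λ → Bool) → ℝ) : ℝ :=
  (∑ φ ∈ enSet Λ J h ε, f φ) / ((enSet Λ J h ε).card : ℝ)

/-!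
The energy density is a function of the magnetization density alone,
`ε_N = -(J/2) m_N² - h m_N`, so `S_ε` is the union of the magnetization shells `S_m` over the
roots `m` of this quadratic, which are `m_±`. The uniform measure on a union of disjoint
shells is the mixture of the uniform measures on the shells, weighted by their sizes.
-/

open Finset

section Averages

variable {α : Type*} (f : α → ℝ)

lemma card_div_mul_sum_div_card (s : Finset α) (d : ℝ) :
    (#s : ℝ) / d * ((∑ x ∈ s, f x) / #s) = (∑ x ∈ s, f x) / d := by
  rcases s.eq_empty_or_nonempty with rfl | hs
  · simp
  · exact div_mul_div_cancel₀' (by simpa using hs.ne_empty) d _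

lemma sum_union_div_card_union [DecidableEq α] {s t : Finset α} (hst : s = t ∨ Disjoint s t) :
    (∑ x ∈ s ∪ t, f x) / #(s ∪ t) =
      (#s : ℝ) / (#s + #t) * ((∑ x ∈ s, f x) / #s) +
        (#t : ℝ) / (#s + #t) * ((∑ x ∈ t, f x) / #t) := by
  rw [card_div_mul_sum_div_card, card_div_mul_sum_div_card, ← add_div]
  rcases hst with rfl | hdisj
  · rw [union_self, ← two_mul, ← two_mul, mul_div_mul_left _ _ two_ne_zero]
  · rw [sum_union hdisj, card_union_of_disjoint hdisj, Nat.cast_add]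

end Averages

lemma neg_half_mul_sq_sub_mul_eq_iff {J h ε m : ℝ} (hJ : J ≠ 0) :
    -(J / 2) * m ^ 2 - h * m = ε ↔ (m + h / J) ^ 2 = h ^ 2 / J ^ 2 - 2 * ε / J := by
  have key : (m + h / J) ^ 2 - (h ^ 2 / J ^ 2 - 2 * ε / J) =
      -(2 / J) * (-(J / 2) * m ^ 2 - h * m - ε) := by
    field_simp; ring
  rw [← sub_eq_zero, ← sub_eq_zero (a := (m + h / J) ^ 2), key, mul_eq_zero,
    or_iff_right (by simpa using hJ)]

lemma neg_half_mul_sq_sub_mul_eq_iff_of_nonneg {J h ε m : ℝ} (hJ : J ≠ 0)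
    (hD : 0 ≤ h ^ 2 / J ^ 2 - 2 * ε / J) :
    -(J / 2) * m ^ 2 - h * m = ε ↔
      m = -h / J + √(h ^ 2 / J ^ 2 - 2 * ε / J) ∨ m = -h / J - √(h ^ 2 / J ^ 2 - 2 * ε / J) := by
  rw [neg_half_mul_sq_sub_mul_eq_iff hJ, ← Real.sq_sqrt hD, sq_eq_sq_iff_eq_or_eq_neg,
    Real.sq_sqrt hD]
  constructor <;> rintro (hm | hm) <;> [left; right; left; right] <;> linear_combination hm

section CurieWeiss

variable {Λ : Type} [Fintype Λ]

lemma ham_div_card (J h : ℝ) (φ : Λ → Bool) :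
    ham Λ J h φ / Fintype.card Λ =
      -(J / 2) * (mag φ / Fintype.card Λ) ^ 2 - h * (mag φ / Fintype.card Λ) := by
  rcases eq_or_ne (Fintype.card Λ : ℝ) 0 with hN | hN
  · simp [hN] -- both sides are `0` by `x / 0 = 0`
  · rw [ham]; field_simp

lemma mem_magSet {m : ℝ} {φ : Λ → Bool} : φ ∈ magSet Λ m ↔ mag φ / Fintype.card Λ = m := by
  simp [magSet]

lemma disjoint_magSet {m m' : ℝ} (hm : m ≠ m') : Disjoint (magSet Λ m) (magSet Λ m') :=
  disjoint_left.mpr fun _ h h' => hm ((mem_magSet.mp h).symm.trans (mem_magSet.mp h'))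

lemma mem_enSet {J h ε : ℝ} {φ : Λ → Bool} :
    φ ∈ enSet Λ J h ε ↔
      -(J / 2) * (mag φ / Fintype.card Λ) ^ 2 - h * (mag φ / Fintype.card Λ) = ε := by
  simp [enSet, ham_div_card]

lemma enSet_eq_magSet_union {J h ε : ℝ} (hJ : J ≠ 0) (hD : 0 ≤ h ^ 2 / J ^ 2 - 2 * ε / J) :
    enSet Λ J h ε =
      magSet Λ (-h / J + √(h ^ 2 / J ^ 2 - 2 * ε / J)) ∪
        magSet Λ (-h / J - √(h ^ 2 / J ^ 2 - 2 * ε / J)) := by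
  ext φ
  rw [mem_union, mem_enSet, mem_magSet, mem_magSet,
    neg_half_mul_sq_sub_mul_eq_iff_of_nonneg hJ hD]

end CurieWeiss

theorem stmt9 (Λ : Type) [Fintype Λ] (J h : ℝ) (hJ : 0 < J) (ε : ℝ)
    (hε : ∃ φ : Λ → Bool, ham Λ J h φ / (Fintype.card Λ : ℝ) = ε)
    (mp mm : ℝ)
    (hmp : mp = -h / J + Real.sqrt (h ^ 2 / J ^ 2 - 2 * ε / J))
    (hmm : mm = -h / J - Real.sqrt (h ^ 2 / J ^ 2 - 2 * ε / J))
    (f : (Λ → Bool) → ℝ) :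
    mcEnExp Λ J h ε f =
      ((magSet Λ mp).card : ℝ) / (((magSet Λ mp).card : ℝ) + ((magSet Λ mm).card : ℝ)) *
          mcMagExp Λ mp f +
        ((magSet Λ mm).card : ℝ) / (((magSet Λ mp).card : ℝ) + ((magSet Λ mm).card : ℝ)) *
          mcMagExp Λ mm f := by
  obtain ⟨φ, hφ⟩ := hε
  have hD : 0 ≤ h ^ 2 / J ^ 2 - 2 * ε / J := by
    rw [ham_div_card, neg_half_mul_sq_sub_mul_eq_iff hJ.ne'] at hφ
    exact hφ ▸ sq_nonneg _
  subst hmp hmm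
  rw [mcEnExp, enSet_eq_magSet_union hJ.ne' hD]
  exact sum_union_div_card_union f ((eq_or_ne _ _).imp (congrArg _) disjoint_magSet)
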